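/- Fundamental averaged bound for catalytic codes. Let 2 ≤ d ≤ n and let ψ be a pure quantum state on A_f ⊗ F ⊗ X_1 ⊗ … ⊗ X_n ⊗ B_in of finite-dimensional systems. Suppose that for every partition {1,…,n} = I ∪ J with |I| = n−d+1 and |J| = d−1, the equality S(X_I B_in)_ψ = S(A_f)_ψ + S(F X_J)_ψ holds. Then S(A_f)_ψ − S(B_in)_ψ ≤ E_{|I|=n−d+1} S(X_I)_ψ − E_{|J|=d−1} S(X_J)_ψ − E_{|J|=d−1} S(F|X_J)_ψ, where the expectations are uniform averages over subsets of {1,…,n} of the indicated cardinality. -/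

import Mathlib

open scoped BigOperators ComplexOrder

/-- Von Neumann entropy of a matrix: `-∑ λ_j log λ_j` over the eigenvalues,
if the matrix is Hermitian (else junk value 0). Natural logarithm,
with the convention `0 * log 0 = 0` (automatic since `Real.log 0 = 0`). -/
noncomputable def vnEntropy {m : Type*} [Fintype m] [DecidableEq m]
    (ρ : Matrix m m ℂ) : ℝ :=
  if h : ρ.IsHermitian then
    -∑ j, h.eigenvalues j * Real.log (h.eigenvalues j)
  else 0

/-- Marginal (partial trace) of a state on the composite system
`⨂_{i : ι} X_i` (with `X_i = ℂ^{dim i}`), keeping the factors in `S`. -/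
noncomputable def marginal {ι : Type*} [Fintype ι] [DecidableEq ι]
    {dim : ι → ℕ}
    (ρ : Matrix ((i : ι) → Fin (dim i)) ((i : ι) → Fin (dim i)) ℂ)
    (S : Finset ι) :
    Matrix ((i : {j : ι // j ∈ S}) → Fin (dim i.1))
           ((i : {j : ι // j ∈ S}) → Fin (dim i.1)) ℂ :=
  fun x y =>
    ∑ z : (i : {j : ι // j ∉ S}) → Fin (dim i.1),
      ρ (fun i => if h : i ∈ S then x ⟨i, h⟩ else z ⟨i, h⟩)
        (fun i => if h : i ∈ S then y ⟨i, h⟩ else z ⟨i, h⟩)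

/-- Entropy of the marginal of `ρ` on the factors in `S`. -/
noncomputable def mEnt {ι : Type*} [Fintype ι] [DecidableEq ι]
    {dim : ι → ℕ}
    (ρ : Matrix ((i : ι) → Fin (dim i)) ((i : ι) → Fin (dim i)) ℂ)
    (S : Finset ι) : ℝ :=
  vnEntropy (marginal ρ S)

/-!
For `|J| = d - 1` and `I = Jᶜ`, decodability gives `S(X_I B_in) = S(A_f) + S(F X_J)`, while
subadditivity gives `S(X_I B_in) ≤ S(X_I) + S(B_in)`; hence
`S(A_f) - S(B_in) ≤ S(X_{Jᶜ}) - S(F X_J)`, and averaging over `J` (an average over `I` is the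
same as one over the complements `J = Iᶜ`) is the claim.

Subadditivity `S(ρ_AB) ≤ S(ρ_A) + S(ρ_B)` is proved in the product of the eigenbases of `ρ_A`
and `ρ_B`. There the diagonal of `ρ_AB` is a classical joint distribution whose marginals are the
spectra of `ρ_A` and `ρ_B`. The diagonal of `ρ_AB` in any orthonormal basis is its spectrum
multiplied by a doubly stochastic matrix, so by concavity of `-x log x` its Shannon entropy is at
least `S(ρ_AB)`; and classical subadditivity is Gibbs' inequality.
-/

open Matrix Real
open scoped Kronecker

section Shannon

variable {ι α β : Type*} [Fintype ι] [Fintype α] [Fintype β]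

lemma sum_negMulLog_le_sum_negMulLog_vecMul [DecidableEq ι] {M : Matrix ι ι ℝ}
    (hM : M ∈ doublyStochastic ℝ ι) {p : ι → ℝ} (hp : ∀ i, 0 ≤ p i) :
    ∑ i, negMulLog (p i) ≤ ∑ j, negMulLog ((p ᵥ* M) j) := by
  obtain ⟨hM0, hrow, hcol⟩ := mem_doublyStochastic_iff_sum.mp hM
  calc ∑ i, negMulLog (p i) = ∑ j, ∑ i, M i j • negMulLog (p i) := by
        rw [Finset.sum_comm]
        simp_rw [smul_eq_mul, ← Finset.sum_mul, hrow, one_mul]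
    _ ≤ ∑ j, negMulLog (∑ i, M i j • p i) := Finset.sum_le_sum fun j _ =>
        concaveOn_negMulLog.le_map_sum (fun i _ => hM0 i j) (hcol j) (fun i _ => hp i)
    _ = ∑ j, negMulLog ((p ᵥ* M) j) := by simp_rw [vecMul, dotProduct, smul_eq_mul, mul_comm]

lemma negMulLog_add_mul_log_le {r s : ℝ} (hr : 0 < r) (hs : 0 < s) :
    negMulLog r + r * log s ≤ s - r := by
  have h := log_le_sub_one_of_pos (div_pos hs hr)
  rw [log_div hs.ne' hr.ne'] at h
  calc negMulLog r + r * log s = r * (log s - log r) := by rw [negMulLog]; ring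
    _ ≤ r * (s / r - 1) := mul_le_mul_of_nonneg_left h hr.le
    _ = s - r := by field_simp

lemma sum_negMulLog_le_add {r : α → β → ℝ} (hr : ∀ a b, 0 ≤ r a b)
    (hr1 : ∑ a, ∑ b, r a b ≤ 1) :
    ∑ a, ∑ b, negMulLog (r a b) ≤
      ∑ a, negMulLog (∑ b, r a b) + ∑ b, negMulLog (∑ a, r a b) := by
  set p : α → ℝ := fun a => ∑ b, r a b
  set q : β → ℝ := fun b => ∑ a, r a b
  have hp : ∀ a b, r a b ≤ p a := fun a b =>
    Finset.single_le_sum (fun b _ => hr a b) (Finset.mem_univ b)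
  have hq : ∀ a b, r a b ≤ q b := fun a b =>
    Finset.single_le_sum (f := fun a => r a b) (fun a _ => hr a b) (Finset.mem_univ a)
  have gibbs : ∀ a b, negMulLog (r a b) + r a b * log (p a) + r a b * log (q b) ≤
      p a * q b - r a b := by
    intro a b
    rcases (hr a b).eq_or_lt with h0 | hpos
    · rw [← h0]
      simp only [negMulLog_zero, zero_mul, add_zero, sub_zero]
      exact mul_nonneg ((hr a b).trans (hp a b)) ((hr a b).trans (hq a b))
    · have hpa := hpos.trans_le (hp a b)
      have hqb := hpos.trans_le (hq a b)
      have := negMulLog_add_mul_log_le hpos (mul_pos hpa hqb)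
      rw [log_mul hpa.ne' hqb.ne'] at this
      linarith
  have hsum := Finset.sum_le_sum fun a (_ : a ∈ Finset.univ) =>
    Finset.sum_le_sum fun b (_ : b ∈ Finset.univ) => gibbs a b
  have hpq : ∑ a, ∑ b, p a * q b = (∑ a, ∑ b, r a b) ^ 2 := by
    rw [← Finset.sum_mul_sum, sq, Finset.sum_comm (f := r)]
  have hlogp : ∑ a, ∑ b, r a b * log (p a) = -∑ a, negMulLog (p a) := by
    simp_rw [← Finset.sum_mul, negMulLog, ← Finset.sum_neg_distrib, neg_mul, neg_neg]
    rfl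
  have hlogq : ∑ a, ∑ b, r a b * log (q b) = -∑ b, negMulLog (q b) := by
    rw [Finset.sum_comm]
    simp_rw [← Finset.sum_mul, negMulLog, ← Finset.sum_neg_distrib, neg_mul, neg_neg]
    rfl
  simp only [Finset.sum_add_distrib, Finset.sum_sub_distrib, hpq, hlogp, hlogq] at hsum
  -- the right-hand side has summed to `T ^ 2 - T ≤ 0`, where `T = ∑ r ≤ 1`
  nlinarith [Finset.sum_nonneg fun a (_ : a ∈ Finset.univ) =>
    Finset.sum_nonneg fun b (_ : b ∈ Finset.univ) => hr a b]

end Shannon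

namespace Matrix

variable {α β α' β' R : Type*}

def traceRight [Fintype β] [AddCommMonoid R] (M : Matrix (α × β) (α × β) R) : Matrix α α R :=
  of fun a a' => ∑ b, M (a, b) (a', b)

def traceLeft [Fintype α] [AddCommMonoid R] (M : Matrix (α × β) (α × β) R) : Matrix β β R :=
  of fun b b' => ∑ a, M (a, b) (a, b')

lemma traceLeft_eq_traceRight_reindex [Fintype α] [AddCommMonoid R]
    (M : Matrix (α × β) (α × β) R) :
    traceLeft M = traceRight (reindex (Equiv.prodComm α β) (Equiv.prodComm α β) M) := rfl

lemma trace_reindex {m n : Type*} [Fintype m] [Fintype n] [AddCommMonoid R] (e : m ≃ n)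
    (M : Matrix m m R) : (reindex e e M).trace = M.trace :=
  Equiv.sum_comp e.symm fun i => M i i

lemma trace_traceRight [Fintype α] [Fintype β] [AddCommMonoid R]
    (M : Matrix (α × β) (α × β) R) : (traceRight M).trace = M.trace := by
  simp [trace, traceRight, Fintype.sum_prod_type]

lemma traceRight_eq_sum_submatrix [Fintype β] [AddCommMonoid R]
    (M : Matrix (α × β) (α × β) R) : traceRight M = ∑ b, M.submatrix (·, b) (·, b) := by
  ext
  simp [traceRight, Matrix.sum_apply]

lemma PosSemidef.traceRight [Fintype β] [CommRing R] [PartialOrder R] [StarRing R]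
    [StarOrderedRing R] {M : Matrix (α × β) (α × β) R} (hM : M.PosSemidef) :
    (traceRight M).PosSemidef := by
  rw [traceRight_eq_sum_submatrix]
  exact posSemidef_sum _ fun b _ => hM.submatrix _

lemma PosSemidef.traceLeft [Fintype α] [CommRing R] [PartialOrder R] [StarRing R]
    [StarOrderedRing R] {M : Matrix (α × β) (α × β) R} (hM : M.PosSemidef) :
    (traceLeft M).PosSemidef :=
  (hM.submatrix (Equiv.prodComm β α)).traceRight

lemma conjTranspose_mul_mul_apply [CommRing R] [StarRing R] {m n : Type*} [Fintype m]
    (X Y : Matrix m n R) (M : Matrix m m R) (i j : n) :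
    (Xᴴ * M * Y) i j = ∑ x, ∑ y, star (X x i) * M x y * Y y j := by
  simp only [mul_apply, conjTranspose_apply, Finset.sum_mul]
  exact Finset.sum_comm

lemma traceRight_conjTranspose_kronecker_mul_mul [Fintype α] [Fintype β] [Fintype β']
    [CommRing R] [StarRing R] [DecidableEq β] (M : Matrix (α × β) (α × β) R) (P : Matrix α α' R)
    {Q : Matrix β β' R} (hQ : Q * Qᴴ = 1) :
    traceRight ((P ⊗ₖ Q)ᴴ * M * (P ⊗ₖ Q)) = Pᴴ * traceRight M * P := by
  ext k k'
  have hQ' : ∀ b b', ∑ l, star (Q b l) * Q b' l = if b = b' then 1 else 0 := fun b b' => by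
    simpa [mul_apply, one_apply, mul_comm, eq_comm] using congr_fun₂ hQ b' b
  calc traceRight ((P ⊗ₖ Q)ᴴ * M * (P ⊗ₖ Q)) k k'
      = ∑ x, ∑ y, ∑ l, star (P x.1 k) * M x y * P y.1 k' * (star (Q x.2 l) * Q y.2 l) := by
        simp only [traceRight, of_apply, conjTranspose_mul_mul_apply, kroneckerMap_apply,
          star_mul']
        rw [Finset.sum_comm]
        refine Finset.sum_congr rfl fun x _ => ?_
        rw [Finset.sum_comm]
        exact Finset.sum_congr rfl fun y _ => Finset.sum_congr rfl fun l _ => by ring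
    _ = ∑ a, ∑ b, ∑ a', star (P a k) * M (a, b) (a', b) * P a' k' := by
        simp only [← Finset.mul_sum, hQ', Fintype.sum_prod_type, mul_ite, mul_one, mul_zero,
          Finset.sum_ite_eq, Finset.mem_univ, if_true]
    _ = (Pᴴ * traceRight M * P) k k' := by
        simp only [conjTranspose_mul_mul_apply, traceRight, of_apply, Finset.mul_sum,
          Finset.sum_mul]
        exact Finset.sum_congr rfl fun a _ => Finset.sum_comm

lemma traceLeft_conjTranspose_kronecker_mul_mul [Fintype α] [Fintype β] [Fintype α']
    [CommRing R] [StarRing R] [DecidableEq α] (M : Matrix (α × β) (α × β) R)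
    {P : Matrix α α' R} (hP : P * Pᴴ = 1) (Q : Matrix β β' R) :
    traceLeft ((P ⊗ₖ Q)ᴴ * M * (P ⊗ₖ Q)) = Qᴴ * traceLeft M * Q := by
  rw [traceLeft_eq_traceRight_reindex, traceLeft_eq_traceRight_reindex,
    ← traceRight_conjTranspose_kronecker_mul_mul _ Q hP]
  congr 1
  ext ⟨b, a⟩ ⟨b', a'⟩
  simp only [reindex_apply, Equiv.prodComm_symm, Equiv.coe_prodComm, submatrix_apply,
    Prod.swap_prod_mk, conjTranspose_mul_mul_apply, kroneckerMap_apply, star_mul', mul_comm,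
    mul_left_comm, Fintype.sum_prod_type]
  rw [Finset.sum_comm]
  exact Finset.sum_congr rfl fun _ _ => Finset.sum_congr rfl fun _ _ => Finset.sum_comm

lemma traceRight_reindex_traceRight_reindex {ν μ γ δ : Type*} [Fintype β] [Fintype γ]
    [Fintype δ] [AddCommMonoid R] (ρ : Matrix ν ν R) (e : ν ≃ μ × γ) (u : μ ≃ α × β)
    (e' : ν ≃ α × δ) (g : δ ≃ β × γ)
    (h : ∀ a d, e'.symm (a, d) = e.symm (u.symm (a, (g d).1), (g d).2)) :
    traceRight (reindex u u (traceRight (reindex e e ρ))) = traceRight (reindex e' e' ρ) := by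
  ext a a'
  simp only [traceRight, of_apply, reindex_apply, submatrix_apply, h]
  rw [← Equiv.sum_comp g.symm, Fintype.sum_prod_type]
  simp only [Equiv.apply_symm_apply]

end Matrix

section vonNeumann

variable {ι : Type*} [Fintype ι] [DecidableEq ι]

lemma vnEntropy_eq_sum_negMulLog {ρ : Matrix ι ι ℂ} (hρ : ρ.IsHermitian) :
    vnEntropy ρ = ∑ i, negMulLog (hρ.eigenvalues i) := by
  simp [vnEntropy, hρ, negMulLog, neg_mul, Finset.sum_neg_distrib]

lemma normSq_mem_doublyStochastic {U : Matrix ι ι ℂ} (hU : U ∈ unitaryGroup ι ℂ) :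
    (of fun i j => Complex.normSq (U i j)) ∈ doublyStochastic ℝ ι := by
  refine mem_doublyStochastic_iff_sum.mpr
    ⟨fun i j => Complex.normSq_nonneg _, fun i => ?_, fun j => ?_⟩
  · have h := congr_fun₂ (mem_unitaryGroup_iff.mp hU) i i
    simp only [mul_apply, star_apply, RCLike.star_def, Complex.mul_conj, one_apply_eq] at h
    exact_mod_cast h
  · have h := congr_fun₂ (mem_unitaryGroup_iff'.mp hU) j j
    simp only [mul_apply, star_apply, RCLike.star_def, mul_comm (starRingEnd ℂ _),
      Complex.mul_conj, one_apply_eq] at h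
    exact_mod_cast h

lemma star_mul_eigenvectorUnitary_mul {ρ : Matrix ι ι ℂ} (hρ : ρ.IsHermitian) :
    star (hρ.eigenvectorUnitary : Matrix ι ι ℂ) * ρ * (hρ.eigenvectorUnitary : Matrix ι ι ℂ) =
      diagonal (RCLike.ofReal ∘ hρ.eigenvalues) := by
  rw [← Unitary.conjStarAlgAut_star_apply (S := ℂ)]
  exact hρ.conjStarAlgAut_star_eigenvectorUnitary

lemma star_mul_diagonal_mul_apply_self (W : Matrix ι ι ℂ) (d : ι → ℝ) (j : ι) :
    (star W * diagonal ((RCLike.ofReal : ℝ → ℂ) ∘ d) * W) j j =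
      ((d ᵥ* of fun i j => Complex.normSq (W i j)) j : ℝ) := by
  rw [mul_apply]
  simp only [mul_diagonal, star_apply, vecMul, dotProduct, of_apply, Complex.ofReal_sum,
    Complex.ofReal_mul, Complex.normSq_eq_conj_mul_self, Function.comp_apply, RCLike.star_def]
  exact Finset.sum_congr rfl fun i _ => by simp only [Complex.coe_algebraMap]; ring

lemma re_star_mul_mul_apply_self {ρ : Matrix ι ι ℂ} (hρ : ρ.IsHermitian) (V : Matrix ι ι ℂ)
    (j : ι) : ((star V * ρ * V) j j).re = (hρ.eigenvalues ᵥ*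
      of fun i j => Complex.normSq ((star (hρ.eigenvectorUnitary : Matrix ι ι ℂ) * V) i j)) j := by
  set U : Matrix ι ι ℂ := (hρ.eigenvectorUnitary : Matrix ι ι ℂ)
  have hconj : star V * ρ * V =
      star (star U * V) * diagonal (RCLike.ofReal ∘ hρ.eigenvalues) * (star U * V) := by
    conv_lhs => rw [hρ.spectral_theorem, Unitary.conjStarAlgAut_apply]
    simp only [U, star_mul, star_star, Matrix.mul_assoc]
  rw [hconj, star_mul_diagonal_mul_apply_self, Complex.ofReal_re]

theorem vnEntropy_le_sum_negMulLog_diag {ρ : Matrix ι ι ℂ} (hρ : ρ.PosSemidef)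
    {V : Matrix ι ι ℂ} (hV : V ∈ unitaryGroup ι ℂ) :
    vnEntropy ρ ≤ ∑ j, negMulLog ((star V * ρ * V) j j).re := by
  simp_rw [vnEntropy_eq_sum_negMulLog hρ.1, re_star_mul_mul_apply_self hρ.1]
  exact sum_negMulLog_le_sum_negMulLog_vecMul (normSq_mem_doublyStochastic
    (mul_mem (Unitary.star_mem hρ.1.eigenvectorUnitary.2) hV)) hρ.eigenvalues_nonneg

lemma reindex_mem_unitaryGroup {κ : Type*} [Fintype κ] [DecidableEq κ] (e : ι ≃ κ)
    {U : Matrix ι ι ℂ} (hU : U ∈ unitaryGroup ι ℂ) : reindex e e U ∈ unitaryGroup κ ℂ := by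
  rw [mem_unitaryGroup_iff', star_eq_conjTranspose, conjTranspose_reindex,
    ← coe_reindexRingEquiv, ← map_mul, ← star_eq_conjTranspose, mem_unitaryGroup_iff'.mp hU,
    map_one]

lemma vnEntropy_reindex_le {κ : Type*} [Fintype κ] [DecidableEq κ] (e : ι ≃ κ)
    {ρ : Matrix ι ι ℂ} (hρ : ρ.PosSemidef) : vnEntropy (reindex e e ρ) ≤ vnEntropy ρ := by
  set U : Matrix ι ι ℂ := (hρ.1.eigenvectorUnitary : Matrix ι ι ℂ)
  have hdiag : star (reindex e e U) * reindex e e ρ * reindex e e U =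
      reindex e e (diagonal (RCLike.ofReal ∘ hρ.1.eigenvalues)) := by
    rw [← star_mul_eigenvectorUnitary_mul hρ.1, star_eq_conjTranspose, conjTranspose_reindex,
      ← star_eq_conjTranspose, ← coe_reindexRingEquiv, ← map_mul, ← map_mul]
  calc vnEntropy (reindex e e ρ)
      ≤ ∑ j, negMulLog ((star (reindex e e U) * reindex e e ρ * reindex e e U) j j).re :=
        vnEntropy_le_sum_negMulLog_diag ((posSemidef_submatrix_equiv e.symm).mpr hρ)
          (reindex_mem_unitaryGroup e hρ.1.eigenvectorUnitary.2)
    _ = ∑ j, negMulLog (hρ.1.eigenvalues (e.symm j)) := by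
        rw [hdiag]
        simp
    _ = vnEntropy ρ := by
        rw [Equiv.sum_comp e.symm (fun i => negMulLog (hρ.1.eigenvalues i)),
          vnEntropy_eq_sum_negMulLog hρ.1]

-- `eigenvalues` enumerates the spectrum through an arbitrary equivalence with `Fin (card ι)`, so
-- it is not transported along `e`; the equality comes from the inequality in both directions.
theorem vnEntropy_reindex {κ : Type*} [Fintype κ] [DecidableEq κ] (e : ι ≃ κ)
    {ρ : Matrix ι ι ℂ} (hρ : ρ.PosSemidef) : vnEntropy (reindex e e ρ) = vnEntropy ρ := by
  refine (vnEntropy_reindex_le e hρ).antisymm ?_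
  simpa using vnEntropy_reindex_le e.symm ((posSemidef_submatrix_equiv e.symm).mpr hρ)

end vonNeumann

lemma sum_re_apply_of_traceRight_eq_diagonal {α β : Type*} [DecidableEq α] [Fintype β]
    {σ : Matrix (α × β) (α × β) ℂ} {w : α → ℝ}
    (h : traceRight σ = diagonal (RCLike.ofReal ∘ w)) (a : α) :
    ∑ b, (σ (a, b) (a, b)).re = w a := by
  simpa [traceRight, Complex.re_sum] using congrArg Complex.re (congr_fun₂ h a a)

theorem vnEntropy_le_vnEntropy_traceRight_add_vnEntropy_traceLeft {α β : Type*} [Fintype α]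
    [DecidableEq α] [Fintype β] [DecidableEq β] {ρ : Matrix (α × β) (α × β) ℂ}
    (hρ : ρ.PosSemidef) (htr : ρ.trace = 1) :
    vnEntropy ρ ≤ vnEntropy (traceRight ρ) + vnEntropy (traceLeft ρ) := by
  have hA := hρ.traceRight.1
  have hB := hρ.traceLeft.1
  set UA : Matrix α α ℂ := (hA.eigenvectorUnitary : Matrix α α ℂ)
  set UB : Matrix β β ℂ := (hB.eigenvectorUnitary : Matrix β β ℂ)
  have hK : UA ⊗ₖ UB ∈ unitaryGroup (α × β) ℂ :=
    kronecker_mem_unitary hA.eigenvectorUnitary.2 hB.eigenvectorUnitary.2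
  set σ := star (UA ⊗ₖ UB) * ρ * (UA ⊗ₖ UB) with hσ_def
  set r : α → β → ℝ := fun a b => (σ (a, b) (a, b)).re
  have hσ : σ.PosSemidef := by
    simpa [σ, star_eq_conjTranspose] using hρ.conjTranspose_mul_mul_same (UA ⊗ₖ UB)
  have hr : ∀ a b, 0 ≤ r a b := fun a b => (Complex.nonneg_iff.mp hσ.diag_nonneg).1
  have hr1 : ∑ a, ∑ b, r a b = 1 := by
    have : σ.trace = 1 := by
      rw [trace_mul_cycle, mem_unitaryGroup_iff.mp hK, Matrix.one_mul, htr]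
    show ∑ a, ∑ b, (σ (a, b) (a, b)).re = 1
    simpa [trace, Fintype.sum_prod_type, Complex.re_sum] using congrArg Complex.re this
  have hrA : ∀ a, ∑ b, r a b = hA.eigenvalues a := by
    refine sum_re_apply_of_traceRight_eq_diagonal ?_
    rw [hσ_def, star_eq_conjTranspose, traceRight_conjTranspose_kronecker_mul_mul ρ UA
      (mem_unitaryGroup_iff.mp hB.eigenvectorUnitary.2), ← star_eq_conjTranspose,
      star_mul_eigenvectorUnitary_mul hA]
  have hrB : ∀ b, ∑ a, r a b = hB.eigenvalues b := by
    refine sum_re_apply_of_traceRight_eq_diagonal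
      (σ := reindex (Equiv.prodComm α β) (Equiv.prodComm α β) σ) ?_
    rw [← traceLeft_eq_traceRight_reindex, hσ_def, star_eq_conjTranspose,
      traceLeft_conjTranspose_kronecker_mul_mul ρ
        (mem_unitaryGroup_iff.mp hA.eigenvectorUnitary.2) UB,
      ← star_eq_conjTranspose, star_mul_eigenvectorUnitary_mul hB]
  calc vnEntropy ρ ≤ ∑ j, negMulLog (σ j j).re := vnEntropy_le_sum_negMulLog_diag hρ hK
    _ = ∑ a, ∑ b, negMulLog (r a b) := Fintype.sum_prod_type _
    _ ≤ ∑ a, negMulLog (∑ b, r a b) + ∑ b, negMulLog (∑ a, r a b) :=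
        sum_negMulLog_le_add hr hr1.le
    _ = vnEntropy (traceRight ρ) + vnEntropy (traceLeft ρ) := by
        simp_rw [hrA, hrB, vnEntropy_eq_sum_negMulLog hA, vnEntropy_eq_sum_negMulLog hB]

def Equiv.piSubtypeEquivPiSubtypeProd {ι : Type*} (β : ι → Type*) {p q r : ι → Prop}
    [DecidablePred q] (hpqr : ∀ i, p i ↔ q i ∨ r i) (hqr : ∀ i, q i → ¬ r i) :
    ((i : {j // p j}) → β i) ≃ ((i : {j // q j}) → β i) × ((i : {j // r j}) → β i) where
  toFun f := (fun i => f ⟨i, (hpqr i).2 (.inl i.2)⟩, fun i => f ⟨i, (hpqr i).2 (.inr i.2)⟩)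
  invFun g i := if h : q i then g.1 ⟨i, h⟩ else g.2 ⟨i, ((hpqr i).1 i.2).resolve_left h⟩
  left_inv f := by
    funext i
    by_cases h : q i <;> simp [h]
  right_inv g := by
    ext i
    · simp [i.2]
    · exact dif_neg fun h => hqr i h i.2

section Marginal

variable {ι : Type*} [Fintype ι] [DecidableEq ι] {dim : ι → ℕ}

def piUnionEquivProd (β : ι → Type*) {S T : Finset ι} (hST : Disjoint S T) :
    ((i : {j // j ∈ S ∪ T}) → β i) ≃ ((i : {j // j ∈ S}) → β i) × ((i : {j // j ∈ T}) → β i) :=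
  Equiv.piSubtypeEquivPiSubtypeProd β (fun _ => Finset.mem_union)
    (fun _ hS hT => Finset.disjoint_left.mp hST hS hT)

lemma marginal_eq_traceRight_reindex
    (ψ : Matrix ((i : ι) → Fin (dim i)) ((i : ι) → Fin (dim i)) ℂ) (S : Finset ι) :
    marginal ψ S = traceRight (reindex (Equiv.piEquivPiSubtypeProd (· ∈ S) fun i => Fin (dim i))
      (Equiv.piEquivPiSubtypeProd (· ∈ S) fun i => Fin (dim i)) ψ) := rfl

lemma marginal_eq_traceRight_marginal_union
    (ψ : Matrix ((i : ι) → Fin (dim i)) ((i : ι) → Fin (dim i)) ℂ) {S T : Finset ι}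
    (hST : Disjoint S T) :
    marginal ψ S = traceRight (reindex (piUnionEquivProd (fun i => Fin (dim i)) hST)
      (piUnionEquivProd (fun i => Fin (dim i)) hST) (marginal ψ (S ∪ T))) := by
  rw [marginal_eq_traceRight_reindex, marginal_eq_traceRight_reindex]
  refine (traceRight_reindex_traceRight_reindex (R := ℂ) ψ _ _ _
    (Equiv.piSubtypeEquivPiSubtypeProd (fun i => Fin (dim i)) (p := (· ∉ S)) (q := (· ∈ T))
      (r := (· ∉ S ∪ T)) ?_ ?_) ?_).symm
  · intro i
    have : i ∈ S → i ∉ T := fun h => Finset.disjoint_left.mp hST h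
    rw [Finset.mem_union]
    tauto
  · intro i hT
    simp [hT]
  · intro a d
    funext i
    by_cases hT : i ∈ T
    · simp [hT, Finset.disjoint_right.mp hST hT, piUnionEquivProd,
        Equiv.piSubtypeEquivPiSubtypeProd, Equiv.piEquivPiSubtypeProd]
    · by_cases hS : i ∈ S <;> simp [hS, hT, piUnionEquivProd,
        Equiv.piSubtypeEquivPiSubtypeProd, Equiv.piEquivPiSubtypeProd]

lemma marginal_eq_traceLeft_marginal_union
    (ψ : Matrix ((i : ι) → Fin (dim i)) ((i : ι) → Fin (dim i)) ℂ) {S T : Finset ι}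
    (hST : Disjoint S T) :
    marginal ψ T = traceLeft (reindex (piUnionEquivProd (fun i => Fin (dim i)) hST)
      (piUnionEquivProd (fun i => Fin (dim i)) hST) (marginal ψ (S ∪ T))) := by
  rw [traceLeft_eq_traceRight_reindex, marginal_eq_traceRight_reindex,
    marginal_eq_traceRight_reindex]
  refine (traceRight_reindex_traceRight_reindex (R := ℂ) ψ _
    ((piUnionEquivProd (fun i => Fin (dim i)) hST).trans (Equiv.prodComm _ _)) _
    (Equiv.piSubtypeEquivPiSubtypeProd (fun i => Fin (dim i)) (p := (· ∉ T)) (q := (· ∈ S))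
      (r := (· ∉ S ∪ T)) ?_ ?_) ?_).symm
  · intro i
    have : i ∈ S → i ∉ T := fun h => Finset.disjoint_left.mp hST h
    rw [Finset.mem_union]
    tauto
  · intro i hS
    simp [hS]
  · intro a d
    funext i
    by_cases hT : i ∈ T
    · simp [hT, Finset.disjoint_right.mp hST hT, piUnionEquivProd,
        Equiv.piSubtypeEquivPiSubtypeProd, Equiv.piEquivPiSubtypeProd]
    · by_cases hS : i ∈ S <;> simp [hS, hT, piUnionEquivProd,
        Equiv.piSubtypeEquivPiSubtypeProd, Equiv.piEquivPiSubtypeProd]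

theorem mEnt_union_le {ψ : Matrix ((i : ι) → Fin (dim i)) ((i : ι) → Fin (dim i)) ℂ}
    (hψ : ψ.PosSemidef) (htr : ψ.trace = 1) {S T : Finset ι} (hST : Disjoint S T) :
    mEnt ψ (S ∪ T) ≤ mEnt ψ S + mEnt ψ T := by
  have hpsd : (marginal ψ (S ∪ T)).PosSemidef := by
    rw [marginal_eq_traceRight_reindex]
    exact (hψ.submatrix _).traceRight
  have htr' : (marginal ψ (S ∪ T)).trace = 1 := by
    rw [marginal_eq_traceRight_reindex, trace_traceRight, trace_reindex, htr]
  rw [mEnt, mEnt, mEnt, ← vnEntropy_reindex (piUnionEquivProd (fun i => Fin (dim i)) hST) hpsd,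
    marginal_eq_traceRight_marginal_union ψ hST, marginal_eq_traceLeft_marginal_union ψ hST]
  exact vnEntropy_le_vnEntropy_traceRight_add_vnEntropy_traceLeft
    ((posSemidef_submatrix_equiv _).mpr hpsd) (by rw [trace_reindex, htr'])

end Marginal

lemma Finset.sum_powersetCard_eq_sum_powersetCard_compl {α M : Type*} [Fintype α]
    [DecidableEq α] [AddCommMonoid M] {m k : ℕ} (hmk : m + k = Fintype.card α)
    (f : Finset α → M) :
    ∑ I ∈ powersetCard m univ, f I = ∑ J ∈ powersetCard k univ, f Jᶜ := by
  refine Finset.sum_nbij' (fun I => Iᶜ) (fun J => Jᶜ) ?_ ?_ (fun I _ => compl_compl I)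
    (fun J _ => compl_compl J) (fun I _ => by rw [compl_compl])
  all_goals
    intro s hs
    simp only [mem_powersetCard_univ, card_compl] at hs ⊢
    omega

/-- Systems: `A_f = Sum.inr 0`, `F = Sum.inr 1`, `B_in = Sum.inr 2`. -/
theorem catalytic_fundamental_bound_general
    (n d : ℕ) (hd : 2 ≤ d) (hdn : d ≤ n)
    (dim : Fin n ⊕ Fin 3 → ℕ)
    (ψ : Matrix ((i : Fin n ⊕ Fin 3) → Fin (dim i))
                ((i : Fin n ⊕ Fin 3) → Fin (dim i)) ℂ)
    (hpsd : ψ.PosSemidef) (htr : ψ.trace = 1)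
    (hdec : ∀ I J : Finset (Fin n), Disjoint I J → I ∪ J = Finset.univ →
      I.card = n - d + 1 → J.card = d - 1 →
      mEnt ψ (I.image Sum.inl ∪ ({Sum.inr 2} : Finset (Fin n ⊕ Fin 3))) =
        mEnt ψ ({Sum.inr 0} : Finset (Fin n ⊕ Fin 3)) + mEnt ψ (({Sum.inr 1} : Finset (Fin n ⊕ Fin 3)) ∪ J.image Sum.inl)) :
    mEnt ψ ({Sum.inr 0} : Finset (Fin n ⊕ Fin 3)) - mEnt ψ ({Sum.inr 2} : Finset (Fin n ⊕ Fin 3))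
      ≤ (∑ I ∈ Finset.powersetCard (n - d + 1) (Finset.univ : Finset (Fin n)),
            mEnt ψ (I.image Sum.inl)) / (n.choose (n - d + 1) : ℝ)
        - (∑ J ∈ Finset.powersetCard (d - 1) (Finset.univ : Finset (Fin n)),
            mEnt ψ (J.image Sum.inl)) / (n.choose (d - 1) : ℝ)
        - (∑ J ∈ Finset.powersetCard (d - 1) (Finset.univ : Finset (Fin n)),
            (mEnt ψ (({Sum.inr 1} : Finset (Fin n ⊕ Fin 3)) ∪ J.image Sum.inl) - mEnt ψ (J.image Sum.inl)))
          / (n.choose (d - 1) : ℝ) := by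
  classical
  have hcompl : n - d + 1 + (d - 1) = Fintype.card (Fin n) := by rw [Fintype.card_fin]; omega
  have key : ∀ J ∈ Finset.powersetCard (d - 1) (Finset.univ : Finset (Fin n)),
      mEnt ψ {Sum.inr 0} - mEnt ψ {Sum.inr 2} ≤
        mEnt ψ (Jᶜ.image Sum.inl) - mEnt ψ ({Sum.inr 1} ∪ J.image Sum.inl) := by
    intro J hJ
    rw [Finset.mem_powersetCard_univ] at hJ
    have hdecJ := hdec Jᶜ J disjoint_compl_left compl_sup_eq_top
      (by rw [Finset.card_compl, hJ]; omega) hJ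
    have hsub := mEnt_union_le hpsd htr (S := Jᶜ.image Sum.inl) (T := {Sum.inr 2})
      (Finset.disjoint_singleton_right.mpr (by simp))
    linarith
  have havg := Finset.le_expect (Finset.powersetCard_nonempty.mpr (by simp; omega)) key
  rw [Finset.expect_eq_sum_div_card, Finset.card_powersetCard, Finset.card_univ,
    Fintype.card_fin] at havg
  rw [Finset.sum_powersetCard_eq_sum_powersetCard_compl hcompl,
    Nat.choose_symm_of_eq_add (by simpa using hcompl.symm)]
  refine havg.trans_eq ?_
  simp only [Finset.sum_sub_distrib]
  ring

/-- fundamental averaged bound for catalytic codes: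
`S(A_f) - S(B_in) ≤ E_I S(X_I) - E_J S(X_J) - E_J S(F|X_J)`.
Systems: `A_f = Sum.inr 0`, `F = Sum.inr 1`, `B_in = Sum.inr 2`. -/
theorem catalytic_fundamental_bound
    (n d q : ℕ) (hq : 2 ≤ q) (hd : 2 ≤ d) (hdn : d ≤ n)
    (dim : Fin n ⊕ Fin 3 → ℕ)
    (hdimX : ∀ i : Fin n, dim (Sum.inl i) = q)
    (ψ : Matrix ((i : Fin n ⊕ Fin 3) → Fin (dim i))
                ((i : Fin n ⊕ Fin 3) → Fin (dim i)) ℂ)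
    (hpsd : ψ.PosSemidef) (htr : ψ.trace = 1) (hpure : ψ.rank = 1)
    (hdec : ∀ I J : Finset (Fin n), Disjoint I J → I ∪ J = Finset.univ →
      I.card = n - d + 1 → J.card = d - 1 →
      mEnt ψ (I.image Sum.inl ∪ ({Sum.inr 2} : Finset (Fin n ⊕ Fin 3))) =
        mEnt ψ ({Sum.inr 0} : Finset (Fin n ⊕ Fin 3)) + mEnt ψ (({Sum.inr 1} : Finset (Fin n ⊕ Fin 3)) ∪ J.image Sum.inl)) :
    mEnt ψ ({Sum.inr 0} : Finset (Fin n ⊕ Fin 3)) - mEnt ψ ({Sum.inr 2} : Finset (Fin n ⊕ Fin 3))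
      ≤ (∑ I ∈ Finset.powersetCard (n - d + 1) (Finset.univ : Finset (Fin n)),
            mEnt ψ (I.image Sum.inl)) / (n.choose (n - d + 1) : ℝ)
        - (∑ J ∈ Finset.powersetCard (d - 1) (Finset.univ : Finset (Fin n)),
            mEnt ψ (J.image Sum.inl)) / (n.choose (d - 1) : ℝ)
        - (∑ J ∈ Finset.powersetCard (d - 1) (Finset.univ : Finset (Fin n)),
            (mEnt ψ (({Sum.inr 1} : Finset (Fin n ⊕ Fin 3)) ∪ J.image Sum.inl) - mEnt ψ (J.image Sum.inl)))
          / (n.choose (d - 1) : ℝ) :=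
  catalytic_fundamental_bound_general n d hd hdn dim ψ hpsd htr hdec
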